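/- Suppose 1 ≤ n ≤ q and let V_c ∈ (0,d0) satisfy Λ(V_c) = 0 and Λ'(V_c) > 0. Then there exists ε > 0 such that for every δ* ∈ (0,ε) there exists τ0 ≥ t0 such that every admissible solution v with v(τ0) = V_c + δ* satisfies |v(t) − V_c| ≥ ε for some t ≥ τ0. -/

import Mathlib

/-!
Near `V_c` the slope of `Λ` is positive, so `Λ x ≥ (Λ'(V_c)/2)(x - V_c)` on some interval
`(V_c, V_c + ε)`. While a solution stays in `[V_c + δ*, V_c + ε)` its derivative is therefore at
least `t^{-n/q} (c - M t^{-1/q})` with `c = Λ'(V_c) δ*/2`, which for `t ≥ τ0` large exceeds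
`c/(2t)` because `n ≤ q`. Comparison with `c/2 · log t`, which is unbounded, pushes the solution
out of the `ε`-neighbourhood.
-/

/-- An admissible solution of the reduced equation
`v'(t) = t^{−n/q}·Λ(v(t)) + ρ(t)` on `[τ0,∞)` with values in `[0,d0]`, where
`|ρ(t)| ≤ M·t^{−(n+1)/q}`. -/
def IsAdmissibleCycle (q n : ℕ) (d0 M τ0 : ℝ) (Λ : ℝ → ℝ) (v : ℝ → ℝ) : Prop :=
  (∀ t ≥ τ0, v t ∈ Set.Icc (0:ℝ) d0) ∧
  ∃ ρ : ℝ → ℝ,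
    (∀ t ≥ τ0, |ρ t| ≤ M * t ^ (-((n:ℝ) + 1)/(q:ℝ))) ∧
    (∀ t ≥ τ0, HasDerivAt v (t ^ (-(n:ℝ)/(q:ℝ)) * Λ (v t) + ρ t) t)

open Set Filter Topology

theorem HasDerivAt.eventually_mul_sub_lt_sub {f : ℝ → ℝ} {f' k x : ℝ}
    (hf : HasDerivAt f f' x) (hk : k < f') :
    ∀ᶠ y in 𝓝[>] x, k * (y - x) < f y - f x := by
  have hslope : ∀ᶠ y in 𝓝[>] x, k < slope f x y :=
    (hasDerivAt_iff_tendsto_slope.1 hf).eventually (lt_mem_nhds hk)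
      |>.filter_mono (nhdsWithin_mono x fun _ hy => ne_of_gt hy)
  filter_upwards [hslope, self_mem_nhdsWithin] with y hy hxy
  rwa [slope_def_field, lt_div_iff₀ (sub_pos.2 hxy)] at hy

theorem le_add_mul_log_of_div_lt_deriv {v v' : ℝ → ℝ} {τ a c : ℝ} (hτ : 0 < τ) (hc : 0 ≤ c)
    (hv : ∀ t ≥ τ, HasDerivAt v (v' t) t) (hv₀ : a ≤ v τ)
    (hv' : ∀ t ≥ τ, a ≤ v t → c / t < v' t) :
    ∀ t ≥ τ, a + c * Real.log (t / τ) ≤ v t := by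
  intro t ht
  have hlog : ∀ s ≥ τ, HasDerivAt (fun s => a + c * Real.log (s / τ)) (c / s) s := by
    intro s hs
    have hs0 : s ≠ 0 := (hτ.trans_le hs).ne'
    refine ((((hasDerivAt_id s).div_const τ).log (div_ne_zero hs0 hτ.ne')).const_mul c
      |>.const_add a).congr_deriv ?_
    simp only [id]
    field_simp
  refine image_le_of_deriv_right_lt_deriv_boundary' (f' := fun s => c / s) (B' := v')
    (fun s hs => (hlog s hs.1).continuousAt.continuousWithinAt)
    (fun s hs => (hlog s hs.1).hasDerivWithinAt) (by simp [hv₀])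
    (fun s hs => (hv s hs.1).continuousAt.continuousWithinAt)
    (fun s hs => (hv s hs.1).hasDerivWithinAt) (fun s hs heq => hv' s hs.1 ?_) ⟨ht, le_rfl⟩
  have : 0 ≤ Real.log (s / τ) := Real.log_nonneg ((one_le_div hτ).2 hs.1)
  rw [← heq]
  nlinarith

theorem exists_le_of_div_lt_deriv {v v' : ℝ → ℝ} {τ a b c : ℝ} (hτ : 0 < τ) (hc : 0 < c)
    (hv : ∀ t ≥ τ, HasDerivAt v (v' t) t) (hv₀ : a ≤ v τ)
    (hv' : ∀ t ≥ τ, a ≤ v t → v t < b → c / t < v' t) :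
    ∃ t ≥ τ, b ≤ v t := by
  by_contra! hbelow
  set t := τ * Real.exp ((b - a) / c)
  have hba : a ≤ b := hv₀.trans (hbelow τ le_rfl).le
  have ht : τ ≤ t :=
    le_mul_of_one_le_right hτ.le (Real.one_le_exp (div_nonneg (sub_nonneg.2 hba) hc.le))
  have hlog : c * Real.log (t / τ) = b - a := by
    rw [mul_div_cancel_left₀ _ hτ.ne', Real.log_exp, mul_div_cancel₀ _ hc.ne']
  have hgrowth := le_add_mul_log_of_div_lt_deriv hτ hc.le hv hv₀
    (fun s hs has => hv' s hs has (hbelow s hs)) t ht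
  linarith [hbelow t ht]

theorem eventually_div_lt_rpow_neg_mul_add {α β c M : ℝ} (hα : α ≤ 1) (hβ : 0 < β)
    (hc : 0 < c) :
    ∀ᶠ t in atTop, ∀ y r, c ≤ y → |r| ≤ M * t ^ (-(α + β)) →
      c / (2 * t) < t ^ (-α) * y + r := by
  have hsmall : ∀ᶠ t in atTop, M * t ^ (-β) < c / 2 := by
    have := (tendsto_rpow_neg_atTop hβ).const_mul M
    rw [mul_zero] at this
    exact this.eventually (gt_mem_nhds (half_pos hc))
  filter_upwards [hsmall, eventually_ge_atTop 1] with t hsmall ht y r hy hr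
  have ht0 : 0 < t := one_pos.trans_le ht
  have hpow : 0 < t ^ (-α) := Real.rpow_pos_of_pos ht0 _
  have hinv : t⁻¹ ≤ t ^ (-α) := by
    rw [← Real.rpow_neg_one]
    exact Real.rpow_le_rpow_of_exponent_le ht (neg_le_neg hα)
  have hsplit : t ^ (-(α + β)) = t ^ (-α) * t ^ (-β) := by
    rw [neg_add, Real.rpow_add ht0]
  calc c / (2 * t) = c / 2 * t⁻¹ := by ring
    _ ≤ c / 2 * t ^ (-α) := by gcongr
    _ < t ^ (-α) * (c - M * t ^ (-β)) := by nlinarith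
    _ ≤ t ^ (-α) * y - M * t ^ (-(α + β)) := by rw [hsplit]; nlinarith
    _ ≤ t ^ (-α) * y + r := by linarith [neg_abs_le r]

theorem unstable_limit_cycle_general
    (q n : ℕ) (hq : 0 < q) (hnq : n ≤ q)
    (d0 t0 M : ℝ)
    (Λ : ℝ → ℝ) (hΛ : ContDiffOn ℝ 1 Λ (Set.Icc (0:ℝ) d0))
    (Vc : ℝ) (hVc : Vc ∈ Set.Ioo (0:ℝ) d0) (hΛVc : Λ Vc = 0)
    (hΛ' : 0 < deriv Λ Vc) :
    ∃ ε > 0, ∀ δs ∈ Set.Ioo (0:ℝ) ε, ∃ τ0 ≥ t0,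
      ∀ v : ℝ → ℝ, IsAdmissibleCycle q n d0 M τ0 Λ v → v τ0 = Vc + δs →
        ∃ t ≥ τ0, ε ≤ |v t - Vc| := by
  set L := deriv Λ Vc
  have hΛd : HasDerivAt Λ L Vc :=
    ((hΛ.differentiableOn one_ne_zero).differentiableAt (Icc_mem_nhds hVc.1 hVc.2)).hasDerivAt
  obtain ⟨u, hu, hΛlin⟩ := mem_nhdsGT_iff_exists_Ioo_subset.1
    (hΛd.eventually_mul_sub_lt_sub (half_lt_self hΛ'))
  refine ⟨u - Vc, sub_pos.2 hu, fun δ hδ => ?_⟩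
  set c := L / 2 * δ
  have hc : 0 < c := mul_pos (half_pos hΛ') hδ.1
  have hα : (n : ℝ) / q ≤ 1 := div_le_one_of_le₀ (by exact_mod_cast hnq) (Nat.cast_nonneg q)
  have hβ : 0 < 1 / (q : ℝ) := by positivity
  obtain ⟨τ, hτ⟩ := eventually_atTop.1
    ((eventually_div_lt_rpow_neg_mul_add (M := M) hα hβ hc).and (eventually_gt_atTop 0))
  refine ⟨max τ t0, le_max_right _ _, fun v ⟨_, ρ, hρ, hv⟩ hv₀ => ?_⟩
  simp only [neg_div, add_div] at hρ hv
  obtain ⟨t, ht, hvt⟩ := exists_le_of_div_lt_deriv (b := u) (hτ _ (le_max_left _ _)).2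
    (half_pos hc) hv hv₀.ge fun t ht hδt hvu => by
      have hlin : L / 2 * (v t - Vc) < Λ (v t) - Λ Vc := hΛlin ⟨by linarith [hδ.1], hvu⟩
      have hcL : c ≤ L / 2 * (v t - Vc) :=
        mul_le_mul_of_nonneg_left (by linarith) (half_pos hΛ').le
      have hcΛ : c ≤ Λ (v t) := by linarith
      rw [div_div]
      exact (hτ t (le_of_max_le_left ht)).1 (Λ (v t)) (ρ t) hcΛ (hρ t ht)
  exact ⟨t, ht, le_abs.2 (Or.inl (by linarith))⟩

/-- if `1 ≤ n ≤ q` and `V_c ∈ (0,d0)` is a zero of `Λ` with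
`Λ'(V_c) > 0`, then `V_c` is repelling: solutions starting at `V_c + δ*`
leave an `ε`-neighbourhood of `V_c`. -/
theorem unstable_limit_cycle
    (q n : ℕ) (hq : 0 < q) (hn : 1 ≤ n) (hnq : n ≤ q)
    (d0 t0 M : ℝ) (hd0 : 0 < d0) (ht0 : 0 < t0) (hM : 0 < M)
    (Λ : ℝ → ℝ) (hΛ : ContDiffOn ℝ 1 Λ (Set.Icc (0:ℝ) d0))
    (Vc : ℝ) (hVc : Vc ∈ Set.Ioo (0:ℝ) d0) (hΛVc : Λ Vc = 0)
    (hΛ' : 0 < deriv Λ Vc) :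
    ∃ ε > 0, ∀ δs ∈ Set.Ioo (0:ℝ) ε, ∃ τ0 ≥ t0,
      ∀ v : ℝ → ℝ, IsAdmissibleCycle q n d0 M τ0 Λ v → v τ0 = Vc + δs →
        ∃ t ≥ τ0, ε ≤ |v t - Vc| :=
  unstable_limit_cycle_general q n hq hnq d0 t0 M Λ hΛ Vc hVc hΛVc hΛ'
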